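/- Let R : ℝ → SO(3) be differentiable and satisfy Ṙ(t) = R(t)(ω̂_imu(t) − ω̂_b(t)) for all t, where ω_imu, ω_b : ℝ → ℝ³. Let R_A, R_B ∈ SO(3) be constant and define R̃(t) = R_B R(t) R_A. Then R̃ satisfies Ṙ̃(t) = R̃(t)(ω̂_imu(t) − ω̃̂_b(t)) for all t, where ω̃_b(t) = R_Aᵀ ω_b(t) + (I − R_Aᵀ) ω_imu(t). -/

import Mathlib

/-- SO(3): real 3×3 matrices with `RᵀR = RRᵀ = I` and `det R = 1`. -/
def SO3 : Set (Matrix (Fin 3) (Fin 3) ℝ) :=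
  {R | R.transpose * R = 1 ∧ R * R.transpose = 1 ∧ R.det = 1}

/-- The hat map: `ω̂` is the skew-symmetric matrix with `ω̂ v = ω × v` for all `v`. -/
def hat (ω : Fin 3 → ℝ) : Matrix (Fin 3) (Fin 3) ℝ :=
  !![0, -ω 2, ω 1; ω 2, 0, -ω 0; -ω 1, ω 0, 0]

lemma hat_sub (u v : Fin 3 → ℝ) : hat u - hat v = hat (u - v) := by
  ext i j
  fin_cases i <;> fin_cases j <;> simp [hat] <;> ring

lemma conj_hat (Q : Matrix (Fin 3) (Fin 3) ℝ) (hQ : Q ∈ SO3) (ω : Fin 3 → ℝ) :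
    Q.transpose * hat ω * Q = hat (Q.transpose.mulVec ω) := by
  obtain ⟨h1, h2, h3⟩ := hQ
  have hadj : Q.adjugate = Q.transpose := by
    have h4 := Matrix.mul_adjugate Q
    rw [h3, one_smul] at h4
    calc Q.adjugate = Q.transpose * (Q * Q.adjugate) := by
          rw [← Matrix.mul_assoc, h1, Matrix.one_mul]
    _ = Q.transpose := by rw [h4, Matrix.mul_one]
  have hc : ∀ i j : Fin 3, Q.adjugate i j = Q j i := by
    intro i j; rw [hadj]; rfl
  have e00 := hc 0 0; have e01 := hc 0 1; have e02 := hc 0 2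
  have e10 := hc 1 0; have e11 := hc 1 1; have e12 := hc 1 2
  have e20 := hc 2 0; have e21 := hc 2 1; have e22 := hc 2 2
  rw [Matrix.adjugate_apply] at e00 e01 e02 e10 e11 e12 e20 e21 e22
  simp [Matrix.det_fin_three, Matrix.updateRow_apply, Pi.single_apply] at e00 e01 e02 e10 e11 e12 e20 e21 e22
  ext i j
  fin_cases i <;> fin_cases j <;>
    simp [Matrix.mul_apply, Matrix.mulVec, dotProduct, hat, Fin.sum_univ_three,
      Matrix.transpose_apply] <;>
  [skip; linear_combination (-ω 0) * e20 + (-ω 1) * e21 + (-ω 2) * e22;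
   linear_combination (ω 0) * e10 + (ω 1) * e11 + (ω 2) * e12;
   linear_combination (ω 0) * e20 + (ω 1) * e21 + (ω 2) * e22;
   skip;
   linear_combination (-ω 0) * e00 + (-ω 1) * e01 + (-ω 2) * e02;
   linear_combination (-ω 0) * e10 + (-ω 1) * e11 + (-ω 2) * e12;
   linear_combination (ω 0) * e00 + (ω 1) * e01 + (ω 2) * e02;
   skip] <;> ring

/-- If `R : ℝ → SO(3)` satisfies (entrywise) `Ṙ(t) = R(t)(ω̂_imu(t) − ω̂_b(t))`, and
`R_A, R_B ∈ SO(3)` are constant, then `R̃(t) = R_B R(t) R_A` satisfies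
`Ṙ̃(t) = R̃(t)(ω̂_imu(t) − ω̃̂_b(t))` with `ω̃_b(t) = R_Aᵀ ω_b(t) + (I − R_Aᵀ) ω_imu(t)`. -/
theorem stmt16 (R : ℝ → Matrix (Fin 3) (Fin 3) ℝ) (ωimu ωb : ℝ → Fin 3 → ℝ)
    (hRmem : ∀ t, R t ∈ SO3)
    (hder : ∀ t i j,
      HasDerivAt (fun s => R s i j) ((R t * (hat (ωimu t) - hat (ωb t))) i j) t)
    (RA RB : Matrix (Fin 3) (Fin 3) ℝ) (hRA : RA ∈ SO3) (hRB : RB ∈ SO3)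
    (Rt : ℝ → Matrix (Fin 3) (Fin 3) ℝ) (hRt : ∀ t, Rt t = RB * R t * RA)
    (ωtb : ℝ → Fin 3 → ℝ)
    (hωtb : ∀ t, ωtb t = RA.transpose.mulVec (ωb t) + (1 - RA.transpose).mulVec (ωimu t)) :
    ∀ t i j, HasDerivAt (fun s => Rt s i j) ((Rt t * (hat (ωimu t) - hat (ωtb t))) i j) t := by
  intro t i j
  have hvec : ωimu t - ωtb t = RA.transpose.mulVec (ωimu t - ωb t) := by
    rw [hωtb, Matrix.sub_mulVec, Matrix.one_mulVec, Matrix.mulVec_sub]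
    abel
  have key : hat (ωimu t) - hat (ωtb t)
      = RA.transpose * (hat (ωimu t) - hat (ωb t)) * RA := by
    rw [hat_sub, hat_sub, conj_hat RA hRA, hvec]
  have hM : Rt t * (hat (ωimu t) - hat (ωtb t))
      = RB * (R t * (hat (ωimu t) - hat (ωb t))) * RA := by
    rw [hRt, key]
    obtain ⟨hA1, hA2, _⟩ := hRA
    have hcan : RB * R t * RA * RA.transpose = RB * R t := by
      rw [Matrix.mul_assoc, hA2, Matrix.mul_one]
    simp only [← Matrix.mul_assoc]
    rw [hcan]
  rw [hM]
  have hfun : (fun s => Rt s i j) = fun s => (RB * R s * RA) i j :=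
    funext fun s => by rw [hRt]
  rw [hfun]
  simp only [Matrix.mul_apply]
  exact HasDerivAt.fun_sum fun b _ =>
    (HasDerivAt.fun_sum fun a _ => (hder t a b).const_mul (RB i a)).mul_const _
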